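/- arXiv:2505.02307 — 3 statements merged into one kernel-verified Lean document; each statement's English description precedes it below -/
import Mathlib

section
/- For all i ≥ 3, the word F_{i-1} occurs in F_i only at position 1. -/
/-- Fibonacci words over the alphabet {a, b}, encoded with `false` = a, `true` = b:
`F 1 = b`, `F 2 = a`, `F i = F (i-1) ++ F (i-2)` for `i ≥ 3`. -/
def fibw : ℕ → List Bool
  | 0 => []
  | 1 => [true]
  | 2 => [false]
  | n + 3 => fibw (n + 2) ++ fibw (n + 1)

/-- `S` occurs in `T` at (1-based) position `p`. -/
def occursAt (S T : List Bool) (p : ℕ) : Prop :=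
  1 ≤ p ∧ S <+: T.drop (p - 1)

lemma fibw_len : ∀ n, (fibw n).length = Nat.fib n
  | 0 => rfl
  | 1 => rfl
  | 2 => rfl
  | n + 3 => by
    simp [fibw, fibw_len (n + 2), fibw_len (n + 1), Nat.fib_add_two]
    omega

lemma fibw_count_true : ∀ n, (fibw (n + 2)).count true = Nat.fib n
  | 0 => rfl
  | 1 => rfl
  | n + 2 => by
    show (fibw ((n + 1) + 3)).count true = _
    rw [fibw, List.count_append, fibw_count_true (n + 1), fibw_count_true n,
      Nat.fib_add_two]
    omega

lemma fibw_count_false : ∀ n, (fibw (n + 1)).count false = Nat.fib n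
  | 0 => rfl
  | 1 => rfl
  | n + 2 => by
    show (fibw (n + 3)).count false = _
    rw [fibw, List.count_append, fibw_count_false (n + 1), fibw_count_false n,
      Nat.fib_add_two]
    omega

lemma count_join_replicate {α : Type*} [BEq α] (t : List α) (x : α) :
    ∀ a : ℕ, ((List.replicate a t).flatten).count x = a * t.count x
  | 0 => by simp
  | a + 1 => by
    rw [List.replicate_succ, List.flatten_cons, List.count_append,
      count_join_replicate t x a, Nat.succ_mul, Nat.add_comm]

/-- Lyndon–Schützenberger: commuting lists are powers of a common word. -/
lemma comm_pow {α : Type*} : ∀ (k : ℕ) (u v : List α), u.length + v.length ≤ k →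
    u ++ v = v ++ u →
    ∃ (t : List α) (a b : ℕ),
      u = (List.replicate a t).flatten ∧ v = (List.replicate b t).flatten := by
  intro k
  induction k with
  | zero =>
    intro u v hk _
    have hu : u = [] := List.eq_nil_of_length_eq_zero (by omega)
    have hv : v = [] := List.eq_nil_of_length_eq_zero (by omega)
    exact ⟨[], 0, 0, by simp [hu], by simp [hv]⟩
  | succ k ih =>
    intro u v hk h
    rcases eq_or_ne u [] with rfl | hu
    · exact ⟨v, 0, 1, by simp, by simp⟩
    rcases eq_or_ne v [] with rfl | hv
    · exact ⟨u, 1, 0, by simp, by simp⟩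
    have hul : 1 ≤ u.length := by
      cases u with | nil => exact absurd rfl hu | cons a l => simp
    have hvl : 1 ≤ v.length := by
      cases v with | nil => exact absurd rfl hv | cons a l => simp
    rcases le_or_gt u.length v.length with hle | hlt
    · -- u is a prefix of v
      have htk : u = v.take u.length := by
        have := congrArg (List.take u.length) h
        rwa [List.take_left, List.take_append_of_le_length hle] at this
      set v' := v.drop u.length with hv'
      have hsplit : v = u ++ v' := by
        rw [htk, hv']; exact (List.take_append_drop _ v).symm
      have h2 : u ++ v' = v' ++ u := by
        have : u ++ (u ++ v') = (u ++ v') ++ u := by rw [← hsplit]; exact h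
        rw [List.append_assoc] at this
        exact (List.append_cancel_left this)
      have hlen : u.length + v'.length ≤ k := by
        have : v'.length = v.length - u.length := by simp [hv']
        omega
      obtain ⟨t, a, b, hu', hv''⟩ := ih u v' hlen h2
      refine ⟨t, a, a + b, hu', ?_⟩
      rw [hsplit, hu', hv'', ← List.flatten_append, ← List.replicate_add]
    · -- v is a prefix of u
      have htk : v = u.take v.length := by
        have := congrArg (List.take v.length) h.symm
        rwa [List.take_left, List.take_append_of_le_length hlt.le] at this
      set u' := u.drop v.length with hu'
      have hsplit : u = v ++ u' := by
        rw [htk, hu']; exact (List.take_append_drop _ u).symm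
      have h2 : v ++ u' = u' ++ v := by
        have : v ++ (v ++ u') = (v ++ u') ++ v := by rw [← hsplit]; exact h.symm
        rw [List.append_assoc] at this
        exact (List.append_cancel_left this)
      have hlen : v.length + u'.length ≤ k := by
        have : u'.length = u.length - v.length := by simp [hu']
        omega
      obtain ⟨t, a, b, hv'', hu''⟩ := ih v u' hlen h2
      refine ⟨t, a + b, a, ?_, hv''⟩
      rw [hsplit, hv'', hu'', ← List.flatten_append, ← List.replicate_add]

lemma no_occ (n q : ℕ) (hq : 1 ≤ q) (h : fibw (n + 2) <+: (fibw (n + 3)).drop q) :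
    False := by
  cases n with
  | zero =>
    -- fibw 2 = [false], fibw 3 = [false, true]
    have hlen := h.length_le
    simp [fibw] at hlen
    have hq1 : q = 1 := by omega
    subst hq1
    have : fibw 2 <+: [true] := by simpa [fibw] using h
    obtain ⟨r, hr⟩ := this
    simp [fibw] at hr
  | succ m =>
    set w := fibw (m + 3) with hw
    set s := fibw (m + 2) with hs
    have hws : fibw (m + 4) = w ++ s := by rw [hw, hs]; rfl
    have hsw : s <+: w := by
      rw [hw, hs, show fibw (m + 3) = fibw (m + 2) ++ fibw (m + 1) from rfl]
      exact List.prefix_append _ _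
    have hwl : w.length = Nat.fib (m + 3) := fibw_len _
    have hsl : s.length = Nat.fib (m + 2) := fibw_len _
    have hfib : Nat.fib (m + 2) < Nat.fib (m + 3) := Nat.fib_lt_fib_succ (by omega)
    replace h : w <+: (w ++ s).drop q := h
    -- q ≤ |s|
    have hlen := h.length_le
    rw [List.length_drop, List.length_append] at hlen
    have hql : q ≤ s.length := by omega
    have hqw : q < w.length := by omega
    rw [List.drop_append_of_le_length (by omega : q ≤ w.length)] at h
    set u := w.take q with hu
    set v := w.drop q with hvdef
    have hwuv : w = u ++ v := (List.take_append_drop _ _).symm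
    have hul : u.length = q := by rw [hu]; simp; omega
    have hvl : v.length = w.length - q := by rw [hvdef]; simp
    -- u = s.take q  (since s is a prefix of w)
    have hus : u = s.take q := by
      obtain ⟨r, hr⟩ := hsw
      rw [hu, ← hr, List.take_append_of_le_length hql]
    -- from the occurrence: u ++ v = v ++ u
    have hcomm : u ++ v = v ++ u := by
      have h1 : w = (v ++ s).take w.length := by
        obtain ⟨r, hr⟩ := h
        rw [← hr, List.take_left]
      rw [List.take_append] at h1
      have hvw : w.length - v.length = q := by omega
      rw [List.take_of_length_le (by omega), hvw, ← hus] at h1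
      calc u ++ v = w := hwuv.symm
        _ = v ++ u := h1
    obtain ⟨t, a, b, hut, hvt⟩ := comm_pow (u.length + v.length) u v le_rfl hcomm
    have ha : 1 ≤ a := by
      rcases Nat.eq_zero_or_pos a with rfl | h'
      · rw [hut] at hul; simp at hul; omega
      · exact h'
    have hb : 1 ≤ b := by
      rcases Nat.eq_zero_or_pos b with rfl | h'
      · rw [hvt] at hvl; simp at hvl; omega
      · exact h'
    have hwt : w = (List.replicate (a + b) t).flatten := by
      rw [hwuv, hut, hvt, ← List.flatten_append, ← List.replicate_add]
    have hct : w.count true = (a + b) * t.count true := by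
      rw [hwt, count_join_replicate]
    have hcf : w.count false = (a + b) * t.count false := by
      rw [hwt, count_join_replicate]
    have hctv : w.count true = Nat.fib (m + 1) := fibw_count_true (m + 1)
    have hcfv : w.count false = Nat.fib (m + 2) := fibw_count_false (m + 2)
    have hd1 : (a + b) ∣ Nat.fib (m + 1) := ⟨t.count true, by rw [← hctv, hct]⟩
    have hd2 : (a + b) ∣ Nat.fib (m + 2) := ⟨t.count false, by rw [← hcfv, hcf]⟩
    have hcop := Nat.fib_coprime_fib_succ (m + 1)
    have hg : Nat.gcd (Nat.fib (m + 1)) (Nat.fib (m + 2)) = 1 := hcop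
    have hdvd : (a + b) ∣ 1 := hg ▸ Nat.dvd_gcd hd1 hd2
    have := Nat.le_of_dvd one_pos hdvd
    omega

theorem fib_pred_occurs_only_at_one (i : ℕ) (hi : 3 ≤ i) (p : ℕ) :
    occursAt (fibw (i - 1)) (fibw i) p ↔ p = 1 := by
  obtain ⟨n, rfl⟩ : ∃ n, i = n + 3 := ⟨i - 3, by omega⟩
  have h1 : n + 3 - 1 = n + 2 := rfl
  constructor
  · rintro ⟨hp, hpre⟩
    by_contra hne
    have hq : 1 ≤ p - 1 := by omega
    rw [h1] at hpre
    exact no_occ n (p - 1) hq hpre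
  · rintro rfl
    refine ⟨le_refl 1, ?_⟩
    rw [h1]
    show fibw (n + 2) <+: fibw (n + 3)
    rw [show fibw (n + 3) = fibw (n + 2) ++ fibw (n + 1) from rfl]
    exact List.prefix_append _ _
end

section
/- For all i ≥ 7, the string F_{i-3} F_{i-6} F_{i-5} occurs exactly once in F_i, and its prefix of length f_{i-2} - 1 also occurs exactly once in F_i. -/
instance (S T : List Bool) (p : ℕ) : Decidable (occursAt S T p) := by
  unfold occursAt; infer_instance


def phi : List Bool → List Bool
  | [] => []
  | false :: l => false :: true :: phi l
  | true :: l => false :: phi l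

lemma phi_append (u v : List Bool) : phi (u ++ v) = phi u ++ phi v := by
  induction u with
  | nil => rfl
  | cons c u ih => cases c <;> simp [phi, ih]

lemma phi_prefix {u v : List Bool} (h : u <+: v) : phi u <+: phi v := by
  obtain ⟨t, rfl⟩ := h; exact ⟨phi t, (phi_append u t).symm⟩

lemma fibw_phi : ∀ k, fibw (k+2) = phi (fibw (k+1))
  | 0 => rfl
  | 1 => rfl
  | (k+2) => by
      show fibw (k+1+3) = phi (fibw (k+3))
      rw [show fibw (k+3) = fibw (k+2) ++ fibw (k+1) from rfl, phi_append,
        ← fibw_phi (k+1), ← fibw_phi k]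
      rfl

lemma phi_head : ∀ (v : List Bool), v ≠ [] → ∃ t, phi v = false :: t
  | [], h => absurd rfl h
  | false :: l, _ => ⟨true :: phi l, rfl⟩
  | true :: l, _ => ⟨phi l, rfl⟩

lemma phi_boundary (v : List Bool) : ∀ (p : ℕ) (w : List Bool),
    (false :: w) <+: (phi v).drop p → ∃ m, (phi (v.take m)).length = p := by
  induction v with
  | nil => intro p w h; rw [show phi [] = [] from rfl] at h; simp at h
  | cons c v' ih =>
    intro p w h
    cases c
    · rw [show phi (false :: v') = false :: true :: phi v' from rfl] at h
      match p with
      | 0 => exact ⟨0, rfl⟩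
      | 1 =>
        exfalso
        simp only [List.drop_succ_cons, List.drop_zero] at h
        exact absurd (List.cons_prefix_cons.mp h).1 (by simp)
      | (p+2) =>
        simp only [List.drop_succ_cons] at h
        obtain ⟨m, hm⟩ := ih p w h
        exact ⟨m+1, by simp [phi, hm]⟩
    · rw [show phi (true :: v') = false :: phi v' from rfl] at h
      match p with
      | 0 => exact ⟨0, rfl⟩
      | (p+1) =>
        simp only [List.drop_succ_cons] at h
        obtain ⟨m, hm⟩ := ih p w h
        exact ⟨m+1, by simp [phi, hm]⟩

lemma phi_decode : ∀ (u s : List Bool), u.getLast? ≠ some true → phi u <+: phi s → u <+: s := by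
  intro u
  induction u with
  | nil => intro s _ _; exact List.nil_prefix
  | cons c u' ih =>
    intro s hlast h
    cases s with
    | nil =>
      exfalso
      rw [show phi ([] : List Bool) = [] from rfl, List.prefix_nil] at h
      cases c <;> simp [phi] at h
    | cons d s' =>
      have hlast' : u'.getLast? ≠ some true := by
        cases u' with
        | nil => simp
        | cons e u'' => rwa [List.getLast?_cons_cons] at hlast
      cases c <;> cases d
      · -- c = false, d = false
        rw [show phi (false :: u') = false :: true :: phi u' from rfl,
          show phi (false :: s') = false :: true :: phi s' from rfl] at h
        have h2 := (List.cons_prefix_cons.mp (List.cons_prefix_cons.mp h).2).2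
        exact List.cons_prefix_cons.mpr ⟨rfl, ih s' hlast' h2⟩
      · -- c = false, d = true
        exfalso
        rw [show phi (false :: u') = false :: true :: phi u' from rfl,
          show phi (true :: s') = false :: phi s' from rfl] at h
        have h2 := (List.cons_prefix_cons.mp h).2
        cases hs' : s' with
        | nil => rw [hs', show phi [] = [] from rfl, List.prefix_nil] at h2; simp at h2
        | cons e s'' =>
          rw [hs'] at h2
          obtain ⟨t, ht⟩ := phi_head (e :: s'') (by simp)
          rw [ht] at h2
          exact absurd (List.cons_prefix_cons.mp h2).1 (by simp)
      · -- c = true, d = false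
        rw [show phi (true :: u') = false :: phi u' from rfl,
          show phi (false :: s') = false :: true :: phi s' from rfl] at h
        have h2 := (List.cons_prefix_cons.mp h).2
        cases hu' : u' with
        | nil => exfalso; rw [hu'] at hlast; simp at hlast
        | cons e u'' =>
          exfalso
          rw [hu'] at h2
          obtain ⟨t, ht⟩ := phi_head (e :: u'') (by simp)
          rw [ht] at h2
          exact absurd (List.cons_prefix_cons.mp h2).1 (by simp)
      · -- c = true, d = true
        rw [show phi (true :: u') = false :: phi u' from rfl,
          show phi (true :: s') = false :: phi s' from rfl] at h
        have h2 := (List.cons_prefix_cons.mp h).2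
        exact List.cons_prefix_cons.mpr ⟨rfl, ih s' hlast' h2⟩

lemma drop_phi (v : List Bool) (m : ℕ) :
    (phi v).drop (phi (v.take m)).length = phi (v.drop m) := by
  have h : phi v = phi (v.take m) ++ phi (v.drop m) := by
    rw [← phi_append, List.take_append_drop]
  rw [h, List.drop_left]

lemma occursAt_phi {S v : List Bool} {q : ℕ} (h : occursAt S v q) :
    occursAt (phi S) (phi v) ((phi (v.take (q-1))).length + 1) := by
  refine ⟨Nat.le_add_left _ _, ?_⟩
  rw [Nat.add_sub_cancel, drop_phi]
  exact phi_prefix h.2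

lemma fibw_step (n : ℕ) : fibw (n+3) = fibw (n+2) ++ fibw (n+1) := rfl

lemma fibw_ends_odd : ∀ k, ∃ z, fibw (2*k+3) = z ++ [false, true]
  | 0 => ⟨[], by decide⟩
  | (k+1) => by
      obtain ⟨z, hz⟩ := fibw_ends_odd k
      refine ⟨fibw (2*k+4) ++ z, ?_⟩
      rw [show 2*(k+1)+3 = (2*k+2)+3 from by ring, fibw_step,
        show 2*k+2+2 = 2*k+4 from rfl, show 2*k+2+1 = 2*k+3 from rfl, hz, List.append_assoc]

lemma fibw_ends_even : ∀ k, ∃ z, fibw (2*k+4) = z ++ [false, true, false]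
  | 0 => ⟨[], by decide⟩
  | (k+1) => by
      obtain ⟨z, hz⟩ := fibw_ends_even k
      refine ⟨fibw (2*k+5) ++ z, ?_⟩
      rw [show 2*(k+1)+4 = (2*k+3)+3 from by ring, fibw_step,
        show 2*k+3+2 = 2*k+5 from rfl, show 2*k+3+1 = 2*k+4 from rfl, hz, List.append_assoc]

def Wj (j : ℕ) : List Bool := fibw (j+4) ++ fibw (j+1) ++ fibw (j+2)
def Qj (j : ℕ) : List Bool := (Wj j).dropLast

lemma Wshape_even (j : ℕ) (hj : Even j) : ∃ y, Wj j = y ++ [false, true, false] := by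
  rcases hj with ⟨k, rfl⟩
  match k with
  | 0 => exact ⟨[false, true], by decide⟩
  | (k+1) =>
    obtain ⟨z, hz⟩ := fibw_ends_even k
    refine ⟨fibw (k+1+(k+1)+4) ++ fibw (k+1+(k+1)+1) ++ z, ?_⟩
    rw [Wj, show k+1+(k+1)+2 = 2*k+4 from by ring, hz]
    simp [List.append_assoc]

lemma Wshape_odd (j : ℕ) (hj : Odd j) : ∃ y, Wj j = y ++ [false, true] := by
  rcases hj with ⟨k, rfl⟩
  obtain ⟨z, hz⟩ := fibw_ends_odd k
  refine ⟨fibw (2*k+1+4) ++ fibw (2*k+1+1) ++ z, ?_⟩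
  rw [Wj, show 2*k+1+2 = 2*k+3 from rfl, hz]
  simp [List.append_assoc]
lemma Wj_phi (j : ℕ) : Wj (j+1) = phi (Wj j) := by
  rw [Wj, Wj, phi_append, phi_append, ← fibw_phi (j+3), ← fibw_phi j, ← fibw_phi (j+1)]

lemma Qj_prefix_Wj (j : ℕ) : Qj j <+: Wj j := by
  rw [Qj, List.dropLast_eq_take]; exact List.take_prefix _ _

lemma key : ∀ j, (∃! p, occursAt (Qj j) (fibw (j+7)) p) ∧ (∃ p, occursAt (Wj j) (fibw (j+7)) p) := by
  intro j
  induction j with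
  | zero =>
    constructor
    · refine ⟨4, by decide, ?_⟩
      intro p hp
      obtain ⟨h1, h2⟩ := hp
      have hb : p ≤ 13 := by
        have hl := h2.length_le
        rw [List.length_drop] at hl
        have hq : (Qj 0).length = 4 := by decide
        have hf : (fibw (0+7)).length = 13 := by decide
        omega
      interval_cases p <;> revert h2 <;> decide
    · exact ⟨4, by decide⟩
  | succ j ih =>
    obtain ⟨⟨q0, hq0, huniq⟩, qW, hqW⟩ := ih
    set v := fibw (j+7) with hvdef
    have hv8 : fibw (j+1+7) = phi v := fibw_phi (j+6)
    have hWq0 : occursAt (Wj j) v q0 :=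
      (huniq qW ⟨hqW.1, (Qj_prefix_Wj j).trans hqW.2⟩) ▸ hqW
    have hW1 : occursAt (Wj (j+1)) (fibw (j+1+7)) ((phi (v.take (q0-1))).length + 1) := by
      rw [hv8, Wj_phi]; exact occursAt_phi hWq0
    refine ⟨?_, _, hW1⟩
    rcases Nat.even_or_odd j with he | ho
    · -- j even
      obtain ⟨y, hylastf, hWy⟩ : ∃ y : List Bool, y.getLast? = some false ∧
          Wj j = y ++ [true, false] := by
        obtain ⟨y', hy'⟩ := Wshape_even j he
        exact ⟨y' ++ [false], by simp, by rw [hy']; simp⟩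
      have hQ : Qj j = y ++ [true] := by
        rw [Qj, hWy, show y ++ [true, false] = (y ++ [true]) ++ [false] by simp,
          List.dropLast_concat]
      have hphiW : phi (Wj j) = phi y ++ [false, false, true] := by
        rw [hWy, phi_append]; rfl
      have hQ1 : Qj (j+1) = phi y ++ [false, false] := by
        rw [Qj, Wj_phi, hphiW,
          show phi y ++ [false, false, true] = (phi y ++ [false, false]) ++ [true] by simp,
          List.dropLast_concat]
      have hylast : y.getLast? ≠ some true := by rw [hylastf]; simp
      have hyne : y ≠ [] := by intro h; rw [h] at hylastf; simp at hylastf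
      obtain ⟨t0, ht0⟩ := phi_head y hyne
      refine ⟨(phi (v.take (q0-1))).length + 1, ⟨Nat.le_add_left _ _, ?_⟩, ?_⟩
      · rw [hv8, Nat.add_sub_cancel, drop_phi, hQ1]
        refine List.IsPrefix.trans ?_ (hphiW ▸ phi_prefix hWq0.2)
        exact (List.prefix_append_right_inj (phi y)).mpr (by decide)
      · intro p hp
        obtain ⟨hp1, hp2⟩ := hp
        rw [hv8, hQ1, ht0, List.cons_append] at hp2
        obtain ⟨m, hm⟩ := phi_boundary v (p-1) _ hp2
        rw [← hm, drop_phi, ← List.cons_append, ← ht0] at hp2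
        have hyp : y <+: v.drop m :=
          phi_decode y _ hylast ((List.prefix_append (phi y) [false, false]).trans hp2)
        obtain ⟨t, ht⟩ := hyp
        rw [← ht, phi_append, List.prefix_append_right_inj] at hp2
        cases t with
        | nil => rw [show phi [] = [] from rfl, List.prefix_nil] at hp2; simp at hp2
        | cons c t' =>
          cases c
          · rw [show phi (false :: t') = false :: true :: phi t' from rfl] at hp2
            simp [List.cons_prefix_cons] at hp2
          · have hQocc : occursAt (Qj j) v (m+1) := by
              refine ⟨by omega, ?_⟩
              rw [Nat.add_sub_cancel, hQ, ← ht]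
              exact ⟨t', by simp⟩
            have hmq := huniq (m+1) hQocc
            have hmm : m = q0 - 1 := by omega
            rw [← hmm]
            omega
    · -- j odd
      obtain ⟨y, hylastf, hWy⟩ : ∃ y : List Bool, y.getLast? = some false ∧
          Wj j = y ++ [true] := by
        obtain ⟨y', hy'⟩ := Wshape_odd j ho
        exact ⟨y' ++ [false], by simp, by rw [hy']; simp⟩
      have hQ : Qj j = y := by rw [Qj, hWy, List.dropLast_concat]
      have hQ1 : Qj (j+1) = phi y := by
        rw [Qj, Wj_phi, hWy, phi_append, show phi [true] = [false] from rfl,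
          List.dropLast_concat]
      have hylast : y.getLast? ≠ some true := by rw [hylastf]; simp
      have hyne : y ≠ [] := by intro h; rw [h] at hylastf; simp at hylastf
      obtain ⟨t0, ht0⟩ := phi_head y hyne
      refine ⟨(phi (v.take (q0-1))).length + 1, ?_, ?_⟩
      · rw [hQ1, hv8, ← hQ]
        exact occursAt_phi hq0
      · intro p hp
        obtain ⟨hp1, hp2⟩ := hp
        rw [hv8, hQ1, ht0] at hp2
        obtain ⟨m, hm⟩ := phi_boundary v (p-1) _ hp2
        rw [← hm, drop_phi, ← ht0] at hp2
        have hyp : y <+: v.drop m := phi_decode y _ hylast hp2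
        have hQocc : occursAt (Qj j) v (m+1) := by
          refine ⟨by omega, ?_⟩
          rw [Nat.add_sub_cancel, hQ]
          exact hyp
        have hmq := huniq (m+1) hQocc
        have hmm : m = q0 - 1 := by omega
        rw [← hmm]
        omega

theorem fib_365_unique (i : ℕ) (hi : 7 ≤ i) :
    (∃! p, occursAt (fibw (i - 3) ++ fibw (i - 6) ++ fibw (i - 5)) (fibw i) p) ∧
    (∃! p, occursAt ((fibw (i - 3) ++ fibw (i - 6) ++ fibw (i - 5)).take
        ((fibw (i - 2)).length - 1)) (fibw i) p) := by
  obtain ⟨j, rfl⟩ : ∃ j, i = j + 7 := ⟨i - 7, by omega⟩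
  rw [show j + 7 - 3 = j + 4 from by omega, show j + 7 - 6 = j + 1 from by omega,
    show j + 7 - 5 = j + 2 from by omega, show j + 7 - 2 = j + 5 from by omega]
  have hW : fibw (j+4) ++ fibw (j+1) ++ fibw (j+2) = Wj j := rfl
  have h5 : fibw (j+5) = fibw (j+4) ++ (fibw (j+2) ++ fibw (j+1)) := by
    rw [show fibw (j+5) = fibw (j+4) ++ fibw (j+3) from rfl,
      show fibw (j+3) = fibw (j+2) ++ fibw (j+1) from rfl]
  have hlen : (fibw (j+5)).length = (Wj j).length := by
    rw [h5]
    simp [Wj, List.length_append]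
    omega
  rw [hW, hlen, ← List.dropLast_eq_take]
  obtain ⟨⟨q0, hq0, huniq⟩, qW, hqW⟩ := key j
  refine ⟨⟨qW, hqW, ?_⟩, ⟨q0, hq0, huniq⟩⟩
  intro p hp
  have h1 := huniq p ⟨hp.1, (Qj_prefix_Wj j).trans hp.2⟩
  have h2 := huniq qW ⟨hqW.1, (Qj_prefix_Wj j).trans hqW.2⟩
  omega
end

section
/- Let Θ_{i,j} denote the set of starting positions of occurrences of F_{i-j} in F_i. Then Θ_{i,0} = Θ_{i,1} = {1}, and for 2 ≤ j ≤ i-4: if j is even, Θ_{i,j} is the disjoint union of Θ_{i,j-1}, Θ_{i,j-2} shifted by f_{i-j}, and {f_i - f_{i-j} + 1}, with maximum f_i - f_{i-j} + 1; if j is odd, Θ_{i,j} is the disjoint union of Θ_{i,j-1} and Θ_{i,j-2} shifted by f_{i-j}, with maximum f_i - f_{i-(j-1)} + 1. -/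
/-- The set of starting positions of occurrences of `F (i-j)` in `F i`. -/
def Theta (i j : ℕ) : Set ℕ := {p | occursAt (fibw (i - j)) (fibw i) p}

/-- abbreviation for length -/
noncomputable def L (n : ℕ) : ℕ := (fibw n).length

lemma fibw_rec (n : ℕ) (h : 3 ≤ n) : fibw n = fibw (n-1) ++ fibw (n-2) := by
  obtain ⟨m, rfl⟩ : ∃ m, n = m + 3 := ⟨n - 3, by omega⟩
  show fibw (m+3) = _
  have : m + 3 - 1 = m + 2 := by omega
  rw [this]
  have : m + 3 - 2 = m + 1 := by omega
  rw [this, fibw]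

lemma L_rec (n : ℕ) (h : 3 ≤ n) : L n = L (n-1) + L (n-2) := by
  unfold L; rw [fibw_rec n h, List.length_append]

lemma L_eq_fib (n : ℕ) : L n = Nat.fib n := by
  induction n using Nat.strong_induction_on with
  | _ n ih =>
    match n with
    | 0 => rfl
    | 1 => rfl
    | 2 => rfl
    | (m+3) =>
      rw [L_rec (m+3) (by omega)]
      have h1 : m + 3 - 1 = m + 2 := by omega
      have h2 : m + 3 - 2 = m + 1 := by omega
      rw [h1, h2, ih (m+2) (by omega), ih (m+1) (by omega)]
      have := Nat.fib_add_two (n := m+1)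
      have h3 : m + 1 + 2 = m + 3 := by omega
      rw [h3, show m+1+1 = m+2 from rfl] at this
      omega

lemma L_pos (n : ℕ) (h : 1 ≤ n) : 1 ≤ L n := by
  rw [L_eq_fib]; exact Nat.fib_pos.2 h

lemma L_mono {m n : ℕ} (h : m ≤ n) : L m ≤ L n := by
  rw [L_eq_fib, L_eq_fib]; exact Nat.fib_mono h

lemma L_lt {m n : ℕ} (hm : 2 ≤ m) (h : m < n) : L m < L n := by
  rw [L_eq_fib, L_eq_fib]
  exact (Nat.fib_lt_fib hm).2 h

lemma fibw_prefix : ∀ n m, 2 ≤ m → m ≤ n → fibw m <+: fibw n := by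
  intro n
  induction n using Nat.strong_induction_on with
  | _ n ih =>
    intro m hm hmn
    rcases eq_or_lt_of_le hmn with rfl | hlt
    · exact List.prefix_refl _
    · have h3 : 3 ≤ n := by omega
      rw [fibw_rec n h3]
      exact (ih (n-1) (by omega) m hm (by omega)).trans (List.prefix_append _ _)

lemma fibw_suffix : ∀ n m, 1 ≤ m → m ≤ n → n % 2 = m % 2 → fibw m <:+ fibw n := by
  intro n
  induction n using Nat.strong_induction_on with
  | _ n ih =>
    intro m hm hmn hpar
    rcases eq_or_lt_of_le hmn with rfl | hlt
    · exact List.suffix_refl _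
    · have h3 : 3 ≤ n := by omega
      rw [fibw_rec n h3]
      exact (ih (n-2) (by omega) m hm (by omega) (by omega)).trans (List.suffix_append _ _)

lemma fibw_take (m n q : ℕ) (hm : 2 ≤ m) (hmn : m ≤ n) (hq : q ≤ L m) :
    (fibw n).take q = (fibw m).take q := by
  obtain ⟨t, ht⟩ := fibw_prefix n m hm hmn
  rw [← ht, List.take_append_of_le_length hq]

lemma fibw_take_L (m n : ℕ) (hm : 2 ≤ m) (hmn : m ≤ n) :
    (fibw n).take (L m) = fibw m := by
  rw [fibw_take m n (L m) hm hmn le_rfl]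
  show List.take ((fibw m).length) (fibw m) = fibw m
  exact List.take_length

lemma fibw_drop_suffix (m n : ℕ) (hm : 1 ≤ m) (hmn : m ≤ n) (hpar : n % 2 = m % 2) :
    (fibw n).drop (L n - L m) = fibw m := by
  obtain ⟨t, ht⟩ := fibw_suffix n m hm hmn hpar
  have hlen : t.length = L n - L m := by
    have := congrArg List.length ht
    simp [L] at this ⊢
    omega
  rw [← ht, ← hlen, List.drop_left]

lemma comm_eq_join (u v : List Bool) (h : u ++ v = v ++ u) :
    ∃ (z : List Bool) (a b : ℕ), u = (List.replicate a z).flatten ∧ v = (List.replicate b z).flatten := by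
  have H : ∀ N (u v : List Bool), u.length + v.length ≤ N → u ++ v = v ++ u →
      ∃ (z : List Bool) (a b : ℕ), u = (List.replicate a z).flatten ∧ v = (List.replicate b z).flatten := by
    intro N
    induction N with
    | zero =>
      intro u v hlen _
      have hu : u = [] := by
        have := List.length_eq_zero_iff.mp (by omega : u.length = 0); exact this
      have hv : v = [] := by
        have := List.length_eq_zero_iff.mp (by omega : v.length = 0); exact this
      exact ⟨[], 0, 0, by simp [hu], by simp [hv]⟩
    | succ N ih =>
      intro u v hlen h
      rcases eq_or_ne u [] with rfl | hu
      · exact ⟨v, 0, 1, by simp, by simp⟩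
      rcases eq_or_ne v [] with rfl | hv
      · exact ⟨u, 1, 0, by simp, by simp⟩
      rcases le_total u.length v.length with hle | hle
      · -- u is a prefix of v
        have hpre : u <+: v := by
          have : u <+: u ++ v := List.prefix_append u v
          rw [h] at this
          exact List.prefix_of_prefix_length_le this (List.prefix_append v u) hle
        obtain ⟨w, rfl⟩ := hpre
        have h' : u ++ w = w ++ u := by
          have : u ++ (u ++ w) = (u ++ w) ++ u := h
          simpa [List.append_assoc, List.append_cancel_left_eq] using this
        have hul : 1 ≤ u.length := by
          rcases u with _ | _ <;> simp_all
        obtain ⟨z, a, b, hu1, hw1⟩ := ih u w (by simp only [List.length_append] at hlen ⊢; omega) h'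
        exact ⟨z, a, a + b, hu1, by rw [List.replicate_add, List.flatten_append, ← hu1, ← hw1]⟩
      · -- v is a prefix of u
        have hpre : v <+: u := by
          have : v <+: v ++ u := List.prefix_append v u
          rw [← h] at this
          exact List.prefix_of_prefix_length_le this (List.prefix_append u v) hle
        obtain ⟨w, rfl⟩ := hpre
        have h' : v ++ w = w ++ v := by
          have h2 : v ++ (w ++ v) = v ++ (v ++ w) := by simpa [List.append_assoc] using h
          exact (List.append_cancel_left h2).symm
        have hvl : 1 ≤ v.length := by
          rcases v with _ | _ <;> simp_all
        obtain ⟨z, a, b, hv1, hw1⟩ := ih v w (by simp only [List.length_append] at hlen ⊢; omega) h'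
        exact ⟨z, a + b, a, by rw [List.replicate_add, List.flatten_append, ← hv1, ← hw1], hv1⟩
  exact H (u.length + v.length) u v le_rfl h

lemma count_join_replicate_s13 (z : List Bool) (a : ℕ) (c : Bool) :
    ((List.replicate a z).flatten).count c = a * z.count c := by
  induction a with
  | zero => simp
  | succ n ih => simp [List.replicate_succ, ih, Nat.succ_mul, Nat.add_comm]

lemma count_false_fibw : ∀ n, 1 ≤ n → (fibw n).count false = Nat.fib (n-1) := by
  intro n
  induction n using Nat.strong_induction_on with
  | _ n ih =>
    intro hn
    match n with
    | 1 => simp [fibw]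
    | 2 => simp [fibw]
    | (m+3) =>
      rw [fibw_rec (m+3) (by omega)]
      simp only [List.count_append]
      rw [ih (m+3-1) (by omega) (by omega), ih (m+3-2) (by omega) (by omega)]
      have : m + 3 - 1 - 1 = m + 1 := by omega
      rw [this]
      have : m + 3 - 2 - 1 = m := by omega
      rw [this]
      have : m + 3 - 1 = m + 2 := by omega
      rw [this]
      have := Nat.fib_add_two (n := m)
      omega

lemma count_true_fibw : ∀ n, 2 ≤ n → (fibw n).count true = Nat.fib (n-2) := by
  intro n
  induction n using Nat.strong_induction_on with
  | _ n ih =>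
    intro hn
    match n with
    | 2 => simp [fibw]
    | 3 => simp [fibw]
    | (m+4) =>
      rw [fibw_rec (m+4) (by omega)]
      simp only [List.count_append]
      rw [ih (m+4-1) (by omega) (by omega), ih (m+4-2) (by omega) (by omega)]
      have : m + 4 - 1 - 2 = m + 1 := by omega
      rw [this]
      have : m + 4 - 2 - 2 = m := by omega
      rw [this]
      have : m + 4 - 2 = m + 2 := by omega
      rw [this]
      have := Nat.fib_add_two (n := m)
      omega

lemma fibw_not_power (k : ℕ) (hk : 2 ≤ k) (z : List Bool) (a : ℕ) (ha : 2 ≤ a) :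
    fibw k ≠ (List.replicate a z).flatten := by
  intro h
  have h1 : (fibw k).count false = a * z.count false := by rw [h, count_join_replicate_s13]
  have h2 : (fibw k).count true = a * z.count true := by rw [h, count_join_replicate_s13]
  rw [count_false_fibw k (by omega)] at h1
  rw [count_true_fibw k hk] at h2
  have hcop : Nat.Coprime (Nat.fib (k-2)) (Nat.fib (k-1)) := by
    have := Nat.fib_coprime_fib_succ (k-2)
    have e : k - 2 + 1 = k - 1 := by omega
    rwa [e] at this
  have hd1 : a ∣ Nat.fib (k-1) := ⟨_, h1⟩
  have hd2 : a ∣ Nat.fib (k-2) := ⟨_, h2⟩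
  have hdvd : a ∣ 1 := hcop ▸ Nat.dvd_gcd hd2 hd1
  exact absurd (Nat.le_of_dvd one_pos hdvd) (by omega)

/-- Primitivity: `F_k` occurs in `F_k F_k` at 0-based position `q ≤ L k` only for `q = 0` or `q = L k`. -/
lemma W1 (k q : ℕ) (hk : 2 ≤ k) (hq : q ≤ L k) (h : fibw k <+: (fibw k ++ fibw k).drop q) :
    q = 0 ∨ q = L k := by
  by_contra hcon
  push_neg at hcon
  have hLk : L k = (fibw k).length := rfl
  obtain ⟨h0, hL⟩ := hcon
  set u := (fibw k).take q with hu
  set v := (fibw k).drop q with hv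
  have huv : u ++ v = fibw k := List.take_append_drop q (fibw k)
  have hdrop : (fibw k ++ fibw k).drop q = v ++ fibw k := by
    rw [List.drop_append_of_le_length hq]
  rw [hdrop] at h
  have hvlen : v.length = L k - q := by simp [hv, L]
  have hfk : fibw k = v ++ u := by
    have h5 := List.prefix_iff_eq_take.mp h
    rw [List.take_append] at h5
    rw [List.take_of_length_le (by omega : v.length ≤ (fibw k).length)] at h5
    rw [(by omega : (fibw k).length - v.length = q)] at h5
    exact h5
  have hcomm : u ++ v = v ++ u := by rw [huv, ← hfk]
  obtain ⟨z, a, b, hu1, hv1⟩ := comm_eq_join u v hcomm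
  have ha : 1 ≤ a := by
    by_contra h'
    have : a = 0 := by omega
    subst this
    simp only [List.replicate_zero, List.flatten_nil] at hu1
    have hq2 : u.length = q := by simp [hu]; omega
    rw [hu1] at hq2
    simp at hq2
    omega
  have hb : 1 ≤ b := by
    by_contra h'
    have : b = 0 := by omega
    subst this
    simp only [List.replicate_zero, List.flatten_nil] at hv1
    rw [hv1] at hvlen
    simp at hvlen
    omega
  apply fibw_not_power k hk z (a + b) (by omega)
  rw [← huv, hu1, hv1, List.replicate_add, List.flatten_append]

lemma occ_fit {k : ℕ} (hk : 1 ≤ k) {B : List Bool} {n : ℕ} (h : fibw k <+: B.drop n) :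
    L k + n ≤ B.length := by
  have hlen := h.length_le
  rw [List.length_drop] at hlen
  have hne : 1 ≤ L k := L_pos k hk
  show (fibw k).length + n ≤ B.length
  by_contra hc
  push_neg at hc
  have : (fibw k).length ≤ B.length - n := hlen
  unfold L at hne
  omega

lemma prefix_append_of_le {A X B : List Bool} (h : A <+: X ++ B) (hl : A.length ≤ X.length) :
    A <+: X := by
  have h1 := List.prefix_iff_eq_take.mp h
  rw [List.take_append_of_le_length hl] at h1
  exact h1 ▸ List.take_prefix _ _

lemma occ_take {A X : List Bool} {s m : ℕ} (h : A <+: X.drop s) (hm : s + A.length ≤ m) :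
    A <+: (X.take m).drop s := by
  rw [List.drop_take]
  rw [List.prefix_take_iff]
  exact ⟨h, by omega⟩

lemma occ_of_occ_take {A X : List Bool} {s m : ℕ} (h : A <+: (X.take m).drop s) :
    A <+: X.drop s :=
  h.trans ((List.take_prefix m X).drop s)

lemma prefix_append_of_prefix {A C D : List Bool} (h : C <+: D) : A ++ C <+: A ++ D := by
  obtain ⟨t, rfl⟩ := h
  exact ⟨t, by simp⟩

lemma occ_into_prefix {A X Y : List Bool} {s : ℕ} (h : A <+: Y.drop s) (hXY : X <+: Y)
    (hm : s + A.length ≤ X.length) : A <+: X.drop s := by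
  have hX : Y.take X.length = X := (List.prefix_iff_eq_take.mp hXY).symm
  rw [← hX]
  exact occ_take h hm

/-- Occurrences of `F_k` in `F_{k+2}` at `q ≤ L (k+1)` are exactly `0, L k, L (k+1)`. -/
lemma W3 (k q : ℕ) (hk : 4 ≤ k) (hq : q ≤ L (k+1)) (h : fibw k <+: (fibw (k+2)).drop q) :
    q = 0 ∨ q = L k ∨ q = L (k+1) := by
  have hrec2 : fibw (k+2) = fibw (k+1) ++ fibw k := by
    have := fibw_rec (k+2) (by omega)
    simpa [show k+2-1 = k+1 by omega, show k+2-2 = k by omega] using this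
  have hrec1 : fibw (k+1) = fibw k ++ fibw (k-1) := by
    have := fibw_rec (k+1) (by omega)
    simpa [show k+1-1 = k by omega] using this
  have hreck : fibw k = fibw (k-1) ++ fibw (k-2) := by
    have := fibw_rec k (by omega)
    simpa [show k-1 = k-1 by omega] using this
  have hL1 : L (k+1) = L k + L (k-1) := by
    have := L_rec (k+1) (by omega)
    simpa [show k+1-1 = k by omega] using this
  have hLpos : 1 ≤ L (k-1) := L_pos _ (by omega)
  have hLmono : L (k-1) ≤ L k := L_mono (by omega)
  have hlenk : (fibw k).length = L k := rfl
  have hlenk1 : (fibw (k-1)).length = L (k-1) := rfl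
  rcases le_or_gt q (L k) with hcase | hcase
  · -- embed into F_k F_k
    have hpp : fibw k ++ fibw k <+: fibw (k+2) := by
      rw [hrec2, hrec1, List.append_assoc]
      apply prefix_append_of_prefix
      nth_rewrite 1 [hreck]
      exact prefix_append_of_prefix (fibw_prefix k (k-2) (by omega) (by omega))
    have h2 : fibw k <+: (fibw k ++ fibw k).drop q :=
      occ_into_prefix h hpp (by simp only [List.length_append, hlenk]; omega)
    rcases W1 k q (by omega) hcase h2 with h0 | h0
    · exact Or.inl h0
    · exact Or.inr (Or.inl h0)
  · -- q > L k : occurrence inside F_{k-1} ++ F_k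
    set s := q - L k with hs
    have hs1 : 1 ≤ s := by omega
    have hs2 : s ≤ L (k-1) := by omega
    have hdrop : (fibw (k+2)).drop q = (fibw (k-1) ++ fibw k).drop s := by
      rw [hrec2, hrec1, List.append_assoc]
      rw [show q = (fibw k).length + s by rw [hlenk]; omega]
      exact List.drop_length_add_append s
    rw [hdrop] at h
    have hpre : fibw (k-1) <+: (fibw (k-1) ++ fibw k).drop s :=
      (fibw_prefix k (k-1) (by omega) (by omega)).trans h
    have hpp2 : fibw (k-1) ++ fibw (k-1) <+: fibw (k-1) ++ fibw k :=
      prefix_append_of_prefix (fibw_prefix k (k-1) (by omega) (by omega))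
    have h3 : fibw (k-1) <+: (fibw (k-1) ++ fibw (k-1)).drop s :=
      occ_into_prefix hpre hpp2 (by simp only [List.length_append, hlenk1]; omega)
    rcases W1 (k-1) s (by omega) hs2 h3 with h0 | h0
    · omega
    · right; right; omega

/-- `S` is a set of indices in `[k, i)`, no two consecutive. -/
def Good (k i : ℕ) (S : Finset ℕ) : Prop :=
  (∀ t ∈ S, k ≤ t ∧ t < i) ∧ (∀ t ∈ S, t + 1 ∉ S)

lemma Good.mono {k i i' : ℕ} {S : Finset ℕ} (h : Good k i S) (hi : i ≤ i') : Good k i' S :=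
  ⟨fun t ht => ⟨(h.1 t ht).1, lt_of_lt_of_le (h.1 t ht).2 hi⟩, h.2⟩

lemma good_empty (k i : ℕ) : Good k i ∅ := ⟨fun t ht => absurd ht (Finset.notMem_empty t), fun t ht => absurd ht (Finset.notMem_empty t)⟩

lemma good_of_le {k i : ℕ} {S : Finset ℕ} (h : Good k i S) (hik : i ≤ k) : S = ∅ := by
  ext t
  simp only [Finset.notMem_empty, iff_false]
  intro ht
  have := h.1 t ht
  omega

lemma good_erase_top {k i : ℕ} {S : Finset ℕ} (h : Good k i S) (hi : i - 1 ∈ S) (h2i : 2 ≤ i) :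
    Good k (i-2) (S.erase (i-1)) := by
  constructor
  · intro t ht
    have ht' := Finset.mem_of_mem_erase ht
    have hne := Finset.ne_of_mem_erase ht
    have h1 := h.1 t ht'
    have h2 : t ≠ i - 2 := by
      intro he
      have hnc := h.2 t ht'
      rw [he, show i - 2 + 1 = i - 1 by omega] at hnc
      exact hnc hi
    omega
  · intro t ht hc
    exact h.2 t (Finset.mem_of_mem_erase ht) (Finset.mem_of_mem_erase hc)

/-- total of nonconsecutive Fibonacci sums with min index `≥ k`, max `< i`, is `≤ L i - L (k-1)` -/
lemma sum_le : ∀ i k (S : Finset ℕ), 2 ≤ k → k ≤ i → Good k i S →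
    (∑ t ∈ S, L t) + L (k-1) ≤ L i := by
  intro i
  induction i using Nat.strong_induction_on with
  | _ i ih =>
    intro k S hk hki hS
    rcases eq_or_lt_of_le hki with rfl | hlt
    · rw [good_of_le hS le_rfl]
      simpa using L_mono (by omega : k - 1 ≤ k)
    · by_cases hmem : i - 1 ∈ S
      · have hrec : L i = L (i-1) + L (i-2) := by
          have := L_rec i (by omega)
          omega
        have hsum : (∑ t ∈ S, L t) = L (i-1) + ∑ t ∈ S.erase (i-1), L t :=
          (Finset.add_sum_erase S L hmem).symm
        rcases le_or_gt k (i-2) with hk2 | hk2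
        · have := ih (i-2) (by omega) k (S.erase (i-1)) hk (by omega)
            (good_erase_top hS hmem (by omega))
          omega
        · -- i - 2 < k : erase is empty
          have : S.erase (i-1) = ∅ :=
            good_of_le (good_erase_top hS hmem (by omega)) (by omega)
          rw [this] at hsum
          simp at hsum
          have h1 : L (k-1) ≤ L (i-2) := L_mono (by omega)
          omega
      · have hS' : Good k (i-1) S := by
          constructor
          · intro t ht
            have := hS.1 t ht
            have : t ≠ i - 1 := fun hc => hmem (hc ▸ ht)
            have := hS.1 t ht
            omega
          · exact hS.2
        have := ih (i-1) (by omega) k S hk (by omega) hS'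
        have := L_mono (by omega : i - 1 ≤ i)
        omega

/-- if the sum exceeds `L i - L k`, it equals `L i - L (k-1)` and `i ≡ k+1 (mod 2)`. -/
lemma gap : ∀ i k (S : Finset ℕ), 2 ≤ k → k ≤ i → Good k i S →
    L i < (∑ t ∈ S, L t) + L k →
    (∑ t ∈ S, L t) + L (k-1) = L i ∧ i % 2 = (k+1) % 2 := by
  intro i
  induction i using Nat.strong_induction_on with
  | _ i ih =>
    intro k S hk hki hS hbig
    rcases eq_or_lt_of_le hki with rfl | hlt
    · rw [good_of_le hS le_rfl] at hbig
      simp at hbig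
    rcases eq_or_lt_of_le (by omega : k + 1 ≤ i) with hkk | hlt2
    · -- i = k + 1
      subst hkk
      by_cases hmem : k ∈ S
      · have hsum : (∑ t ∈ S, L t) = L k + ∑ t ∈ S.erase k, L t :=
          (Finset.add_sum_erase S L hmem).symm
        have hempty : S.erase k = ∅ := by
          ext t
          simp only [Finset.notMem_empty, iff_false, Finset.mem_erase]
          rintro ⟨hne, ht⟩
          have := hS.1 t ht
          omega
        rw [hempty] at hsum
        simp at hsum
        have : L (k+1) = L k + L (k-1) := by
          have := L_rec (k+1) (by omega)
          simpa [show k+1-1 = k by omega, show k+1-2 = k-1 by omega] using this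
        constructor
        · omega
        · omega
      · have : S = ∅ := by
          ext t
          simp only [Finset.notMem_empty, iff_false]
          intro ht
          have := hS.1 t ht
          have : t = k := by omega
          exact hmem (this ▸ ht)
        rw [this] at hbig
        simp at hbig
        have := L_mono (by omega : k ≤ k+1)
        omega
    · -- i ≥ k + 2
      have hrec : L i = L (i-1) + L (i-2) := by
        have := L_rec i (by omega)
        omega
      by_cases hmem : i - 1 ∈ S
      · have hsum : (∑ t ∈ S, L t) = L (i-1) + ∑ t ∈ S.erase (i-1), L t :=
          (Finset.add_sum_erase S L hmem).symm
        have hG := good_erase_top hS hmem (by omega)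
        have := ih (i-2) (by omega) k (S.erase (i-1)) hk (by omega) hG (by omega)
        constructor
        · omega
        · omega
      · have hS' : Good k (i-1) S := by
          constructor
          · intro t ht
            have h1 := hS.1 t ht
            have : t ≠ i - 1 := fun hc => hmem (hc ▸ ht)
            omega
          · exact hS.2
        have hle := sum_le (i-1) k S hk (by omega) hS'
        -- contradiction : sum + L k ≤ L (i-1) + L k - L (k-1) ≤ L i
        have hk2 : L k ≤ L (k-1) + L (i-2) := by
          rcases eq_or_lt_of_le hk with rfl | hk3
          · have : L (2-1) = 1 := rfl
            have : L 2 = 1 := rfl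
            have := L_pos (i-2) (by omega)
            omega
          · have : L k = L (k-1) + L (k-2) := by
              have := L_rec k (by omega)
              omega
            have := L_mono (by omega : k - 2 ≤ i - 2)
            omega
        omega

/-- Zeckendorf-type uniqueness. -/
lemma sum_inj : ∀ i k (S T : Finset ℕ), 2 ≤ k → Good k i S → Good k i T →
    (∑ t ∈ S, L t) = (∑ t ∈ T, L t) → S = T := by
  intro i
  induction i using Nat.strong_induction_on with
  | _ i ih =>
    intro k S T hk hS hT hsum
    rcases le_or_gt i k with hik | hki
    · rw [good_of_le hS hik, good_of_le hT hik]
    have key : ∀ (A B : Finset ℕ), Good k i A → Good k i B → (∑ t ∈ A, L t) = (∑ t ∈ B, L t) →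
        i - 1 ∈ A → i - 1 ∈ B := by
      intro A B hA hB hsum hmem
      by_contra hmemB
      have hB' : Good k (i-1) B := by
        constructor
        · intro t ht
          have h1 := hB.1 t ht
          have : t ≠ i - 1 := fun hc => hmemB (hc ▸ ht)
          omega
        · exact hB.2
      have hle := sum_le (i-1) k B hk (by omega) hB'
      have hge : L (i-1) ≤ ∑ t ∈ A, L t :=
        Finset.single_le_sum (fun _ _ => Nat.zero_le _) hmem
      have hpos : 1 ≤ L (k-1) := L_pos _ (by omega)
      omega
    by_cases hmem : i - 1 ∈ S
    · have hmemT : i - 1 ∈ T := key S T hS hT hsum hmem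
      have hS' := good_erase_top hS hmem (by omega)
      have hT' := good_erase_top hT hmemT (by omega)
      rw [← Finset.add_sum_erase S L hmem, ← Finset.add_sum_erase T L hmemT] at hsum
      have := ih (i-2) (by omega) k (S.erase (i-1)) (T.erase (i-1)) hk
        (good_erase_top hS hmem (by omega)) (good_erase_top hT hmemT (by omega)) (by omega)
      have hins : ∀ (A : Finset ℕ), i - 1 ∈ A → A = insert (i-1) (A.erase (i-1)) :=
        fun A hA => (Finset.insert_erase hA).symm
      rw [hins S hmem, hins T hmemT, this]
    · have hmemT : i - 1 ∉ T := fun hc => hmem (key T S hT hS hsum.symm hc)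
      have hS' : Good k (i-1) S := by
        refine ⟨fun t ht => ?_, hS.2⟩
        have h1 := hS.1 t ht
        have : t ≠ i - 1 := fun hc => hmem (hc ▸ ht)
        omega
      have hT' : Good k (i-1) T := by
        refine ⟨fun t ht => ?_, hT.2⟩
        have h1 := hT.1 t ht
        have : t ≠ i - 1 := fun hc => hmemT (hc ▸ ht)
        omega
      exact ih (i-1) (by omega) k S T hk hS' hT' hsum

/-- the alternating set `{a, a+2, ..., a+2m}` sums to `L (a+2m+1) - L (a-1)`. -/
lemma alt_sum : ∀ (m a : ℕ), 2 ≤ a → ∃ S : Finset ℕ,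
    (∀ t ∈ S, a ≤ t ∧ t ≤ a + 2*m) ∧ (∀ t ∈ S, t + 1 ∉ S) ∧
    (∑ t ∈ S, L t) + L (a-1) = L (a + 2*m + 1) := by
  intro m
  induction m with
  | zero =>
    intro a ha
    refine ⟨{a}, by simp, by simp, ?_⟩
    simp only [Finset.sum_singleton]
    have := L_rec (a+1) (by omega)
    simp only [show a+2*0+1 = a+1 by omega, show a+1-1 = a by omega, show a+1-2 = a-1 by omega] at *
    omega
  | succ m ih =>
    intro a ha
    obtain ⟨S, h1, h2, h3⟩ := ih a ha
    set b := a + 2*(m+1) with hb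
    refine ⟨insert b S, ?_, ?_, ?_⟩
    · intro t ht
      rcases Finset.mem_insert.mp ht with rfl | ht'
      · omega
      · have := h1 t ht'
        omega
    · intro t ht hc
      rcases Finset.mem_insert.mp ht with rfl | ht'
      · rcases Finset.mem_insert.mp hc with h' | h'
        · omega
        · have := h1 _ h'
          omega
      · rcases Finset.mem_insert.mp hc with h' | h'
        · have := h1 t ht'
          omega
        · exact h2 t ht' h'
    · have hnb : b ∉ S := by
        intro hc
        have := h1 b hc
        omega
      rw [Finset.sum_insert hnb]
      have hLb : L (b+1) = L b + L (b-1) := by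
        have := L_rec (b+1) (by omega)
        simpa [show b+1-1 = b by omega, show b+1-2 = b-1 by omega] using this
      have : a + 2*m + 1 = b - 1 := by omega
      rw [this] at h3
      omega

/-- The main characterization: 0-based occurrences of `F_k` in `F_i` are exactly the
nonconsecutive Fibonacci sums over `[k, i)` that fit. -/
theorem main : ∀ i k n, 4 ≤ k → k ≤ i →
    (fibw k <+: (fibw i).drop n ↔
      ∃ S : Finset ℕ, Good k i S ∧ n = (∑ t ∈ S, L t) ∧ n + L k ≤ L i) := by
  intro i
  induction i using Nat.strong_induction_on with
  | _ i ih =>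
    intro k n hk hki
    have hLkpos : 1 ≤ L k := L_pos k (by omega)
    have hlenk : (fibw k).length = L k := rfl
    rcases eq_or_lt_of_le hki with rfl | hki1
    · -- i = k
      constructor
      · intro h
        have := occ_fit (by omega) h
        have hn : n = 0 := by unfold L at *; omega
        exact ⟨∅, good_empty k k, by simpa using hn, by omega⟩
      · rintro ⟨S, hG, hn, hfit⟩
        rw [good_of_le hG le_rfl] at hn
        simp at hn
        subst hn
        simp
    rcases eq_or_lt_of_le (by omega : k + 1 ≤ i) with hkk | hki2
    · -- i = k + 1
      subst hkk
      have hrec1 : fibw (k+1) = fibw k ++ fibw (k-1) := by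
        have := fibw_rec (k+1) (by omega)
        simpa [show k+1-1 = k by omega] using this
      have hL1 : L (k+1) = L k + L (k-1) := by
        have := L_rec (k+1) (by omega)
        simpa [show k+1-1 = k by omega, show k+1-2 = k-1 by omega] using this
      have hlt : L (k-1) < L k := L_lt (by omega) (by omega)
      constructor
      · intro h
        have hfit := occ_fit (by omega : 1 ≤ k) h
        have hn : n ≤ L (k-1) := by unfold L at *; omega
        have hn0 : n = 0 := by
          by_contra h0
          have hYX : fibw (k+1) <+: fibw k ++ fibw k := by
            rw [hrec1]
            exact prefix_append_of_prefix (fibw_prefix k (k-1) (by omega) (by omega))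
          have h2 : fibw k <+: (fibw k ++ fibw k).drop n := h.trans (hYX.drop n)
          rcases W1 k n (by omega) (by omega) h2 with h' | h' <;> omega
        subst hn0
        exact ⟨∅, good_empty _ _, by simp, by omega⟩
      · rintro ⟨S, hG, hn, hfit⟩
        by_cases hmem : k ∈ S
        · exfalso
          have hsum : (∑ t ∈ S, L t) = L k + ∑ t ∈ S.erase k, L t :=
            (Finset.add_sum_erase S L hmem).symm
          have hempty : S.erase k = ∅ := by
            ext t
            simp only [Finset.notMem_empty, iff_false, Finset.mem_erase]
            rintro ⟨hne, ht⟩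
            have := hG.1 t ht
            omega
          rw [hempty] at hsum
          simp at hsum
          omega
        · have hempty : S = ∅ := by
            ext t
            simp only [Finset.notMem_empty, iff_false]
            intro ht
            have := hG.1 t ht
            have : t = k := by omega
            exact hmem (this ▸ ht)
          rw [hempty] at hn
          simp at hn
          subst hn
          simp only [List.drop_zero]
          exact fibw_prefix (k+1) k (by omega) (by omega)
    · -- i ≥ k + 2
      have hrec : fibw i = fibw (i-1) ++ fibw (i-2) := fibw_rec i (by omega)
      have hLrec : L i = L (i-1) + L (i-2) := by
        have := L_rec i (by omega)
        omega
      have hlen1 : (fibw (i-1)).length = L (i-1) := rfl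
      have hlen2 : (fibw (i-2)).length = L (i-2) := rfl
      have hLk1 : L (k+1) = L k + L (k-1) := by
        have := L_rec (k+1) (by omega)
        simpa [show k+1-1 = k by omega, show k+1-2 = k-1 by omega] using this
      have hL2 : L (k+1) ≤ L (i-1) := L_mono (by omega)
      have hLk2i : L k ≤ L (i-2) := L_mono (by omega)
      have hLk1pos : 1 ≤ L (k-1) := L_pos _ (by omega)
      rcases le_or_gt (n + L k) (L (i-1)) with hca | hca
      · -- case (a) : occurrence inside F_{i-1}
        have hiff : fibw k <+: (fibw i).drop n ↔ fibw k <+: (fibw (i-1)).drop n := by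
          constructor
          · intro h
            rw [hrec, List.drop_append_of_le_length (by omega : n ≤ (fibw (i-1)).length)] at h
            exact prefix_append_of_le h (by simp only [hlenk, List.length_drop, hlen1]; omega)
          · intro h
            rw [hrec, List.drop_append_of_le_length (by omega : n ≤ (fibw (i-1)).length)]
            exact h.trans (List.prefix_append _ _)
        rw [hiff, ih (i-1) (by omega) k n hk (by omega)]
        constructor
        · rintro ⟨S, hG, hn, hfit⟩
          exact ⟨S, hG.mono (by omega), hn, by omega⟩
        · rintro ⟨S, hG, hn, hfit⟩
          have hmem : i - 1 ∉ S := by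
            intro hmem
            have := Finset.single_le_sum (f := L) (fun _ _ => Nat.zero_le _) hmem
            omega
          refine ⟨S, ⟨fun t ht => ?_, hG.2⟩, hn, by omega⟩
          have h1 := hG.1 t ht
          have : t ≠ i - 1 := fun hc => hmem (hc ▸ ht)
          omega
      rcases le_or_gt (L (i-1)) n with hcb | hcb
      · -- case (b) : occurrence inside F_{i-2}
        have heq : (fibw i).drop n = (fibw (i-2)).drop (n - L (i-1)) := by
          rw [hrec]
          have h9 : List.drop ((fibw (i-1)).length + (n - L (i-1))) (fibw (i-1) ++ fibw (i-2)) =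
              List.drop (n - L (i-1)) (fibw (i-2)) := by
            rw [← List.drop_drop, List.drop_left]
          rw [← h9]
          congr 1
          rw [hlen1]
          omega
        rw [heq, ih (i-2) (by omega) k (n - L (i-1)) hk (by omega)]
        constructor
        · rintro ⟨S, hG, hn, hfit⟩
          have hnot : i - 1 ∉ S := by
            intro hmem
            have := (hG.1 (i-1) hmem).2
            omega
          refine ⟨insert (i-1) S, ⟨?_, ?_⟩, ?_, ?_⟩
          · intro t ht
            rcases Finset.mem_insert.mp ht with rfl | ht'
            · omega
            · have := hG.1 t ht'
              omega
          · intro t ht hc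
            rcases Finset.mem_insert.mp ht with rfl | ht'
            · rcases Finset.mem_insert.mp hc with h' | h'
              · omega
              · have := (hG.1 _ h').2
                omega
            · rcases Finset.mem_insert.mp hc with h' | h'
              · have := (hG.1 t ht').2
                omega
              · exact hG.2 t ht' h'
          · rw [Finset.sum_insert hnot]
            omega
          · omega
        · rintro ⟨S, hG, hn, hfit⟩
          have hmem : i - 1 ∈ S := by
            by_contra hmem
            have hG' : Good k (i-1) S := by
              refine ⟨fun t ht => ?_, hG.2⟩
              have h1 := hG.1 t ht
              have : t ≠ i - 1 := fun hc => hmem (hc ▸ ht)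
              omega
            have := sum_le (i-1) k S (by omega) (by omega) hG'
            omega
          refine ⟨S.erase (i-1), good_erase_top hG hmem (by omega), ?_, ?_⟩
          · have := (Finset.add_sum_erase S L hmem).symm
            omega
          · have := (Finset.add_sum_erase S L hmem).symm
            have hle := sum_le (i-2) k (S.erase (i-1)) (by omega) (by omega)
              (good_erase_top hG hmem (by omega))
            omega
      · -- case (c) : straddling occurrence
        have hkey : fibw k <+: (fibw i).drop n ↔ (i % 2 = k % 2 ∧ n = L (i-1) - L (k-1)) := by
          constructor
          · intro h
            have hpar : (i-1) % 2 = (k+1) % 2 := by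
              by_contra hpar
              have hpar' : (i-1) % 2 = k % 2 := by omega
              -- F_{i-1} ends with F_k ; embed into F_k F_k and contradict W1
              have hsuf : (fibw (i-1)).drop (L (i-1) - L k) = fibw k :=
                fibw_drop_suffix k (i-1) (by omega) (by omega) hpar'
              have hdropFi : (fibw i).drop (L (i-1) - L k) = fibw k ++ fibw (i-2) := by
                rw [hrec, List.drop_append_of_le_length (by rw [hlen1]; omega), hsuf]
              set s := n - (L (i-1) - L k) with hs
              have hs1 : 1 ≤ s := by omega
              have hs2 : s ≤ L k - 1 := by omega
              have h' : fibw k <+: (fibw k ++ fibw (i-2)).drop s := by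
                rw [← hdropFi, List.drop_drop, show L (i-1) - L k + s = n by omega]
                exact h
              have hYX : fibw k ++ fibw k <+: fibw k ++ fibw (i-2) :=
                prefix_append_of_prefix (fibw_prefix (i-2) k (by omega) (by omega))
              have h2 := occ_into_prefix h' hYX
                (by simp only [List.length_append, hlenk]; omega)
              rcases W1 k s (by omega) (by omega) h2 with h0 | h0 <;> omega
            -- F_{i-1} ends with F_{k+1} ; use W3
            have hsuf : (fibw (i-1)).drop (L (i-1) - L (k+1)) = fibw (k+1) :=
              fibw_drop_suffix (k+1) (i-1) (by omega) (by omega) hpar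
            have hdropFi : (fibw i).drop (L (i-1) - L (k+1)) = fibw (k+1) ++ fibw (i-2) := by
              rw [hrec, List.drop_append_of_le_length (by rw [hlen1]; omega), hsuf]
            set r := n - (L (i-1) - L (k+1)) with hr
            have hr1 : L (k-1) + 1 ≤ r := by omega
            have hr2 : r ≤ L (k+1) - 1 := by omega
            have h' : fibw k <+: (fibw (k+1) ++ fibw (i-2)).drop r := by
              rw [← hdropFi, List.drop_drop, show L (i-1) - L (k+1) + r = n by omega]
              exact h
            have hYX : fibw (k+1) ++ fibw k <+: fibw (k+1) ++ fibw (i-2) :=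
              prefix_append_of_prefix (fibw_prefix (i-2) k (by omega) (by omega))
            have h2 := occ_into_prefix h' hYX
              (by simp only [List.length_append, hlenk, show (fibw (k+1)).length = L (k+1) from rfl]; omega)
            have hrecK : fibw (k+2) = fibw (k+1) ++ fibw k := by
              have := fibw_rec (k+2) (by omega)
              simpa [show k+2-1 = k+1 by omega, show k+2-2 = k by omega] using this
            rw [← hrecK] at h2
            rcases W3 k r hk (by omega) h2 with h0 | h0 | h0
            · omega
            · constructor
              · omega
              · omega
            · omega
          · rintro ⟨hpar, hn⟩
            have hpar' : (i-1) % 2 = (k+1) % 2 := by omega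
            have hsuf : (fibw (i-1)).drop (L (i-1) - L (k+1)) = fibw (k+1) :=
              fibw_drop_suffix (k+1) (i-1) (by omega) (by omega) hpar'
            have hdropFi : (fibw i).drop (L (i-1) - L (k+1)) = fibw (k+1) ++ fibw (i-2) := by
              rw [hrec, List.drop_append_of_le_length (by rw [hlen1]; omega), hsuf]
            have hrec1 : fibw (k+1) = fibw k ++ fibw (k-1) := by
              have := fibw_rec (k+1) (by omega)
              simpa [show k+1-1 = k by omega] using this
            have hreck : fibw k = fibw (k-1) ++ fibw (k-2) := by
              have := fibw_rec k (by omega)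
              simpa using this
            have hocc : fibw k <+: (fibw (k+1) ++ fibw (i-2)).drop (L k) := by
              rw [hrec1, List.append_assoc, show L k = (fibw k).length from rfl, List.drop_left]
              nth_rewrite 1 [hreck]
              exact prefix_append_of_prefix (fibw_prefix (i-2) (k-2) (by omega) (by omega))
            rw [show n = L (i-1) - L (k+1) + L k by omega, ← List.drop_drop, hdropFi]
            exact hocc
        rw [hkey]
        constructor
        · rintro ⟨hpar, hn⟩
          obtain ⟨S, h1, h2, h3⟩ := alt_sum ((i - 2 - k) / 2) k (by omega)
          have hb : k + 2 * ((i-2-k)/2) = i - 2 := by omega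
          have hb1 : k + 2 * ((i-2-k)/2) + 1 = i - 1 := by omega
          rw [hb1] at h3
          rw [hb] at h1
          refine ⟨S, ⟨fun t ht => ?_, h2⟩, by omega, ?_⟩
          · have := h1 t ht
            omega
          · -- n + L k ≤ L i
            have hk2 : L (k-2) ≤ L (i-2) := L_mono (by omega)
            have hLk : L k = L (k-1) + L (k-2) := by
              have := L_rec k (by omega)
              omega
            omega
        · rintro ⟨S, hG, hn, hfit⟩
          have hmem : i - 1 ∉ S := by
            intro hmem
            have := Finset.single_le_sum (f := L) (fun _ _ => Nat.zero_le _) hmem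
            omega
          have hG' : Good k (i-1) S := by
            refine ⟨fun t ht => ?_, hG.2⟩
            have h1 := hG.1 t ht
            have : t ≠ i - 1 := fun hc => hmem (hc ▸ ht)
            omega
          have := gap (i-1) k S (by omega) (by omega) hG' (by omega)
          constructor
          · omega
          · omega

lemma mem_theta (i j k : ℕ) (hk : i - j = k) (hk4 : 4 ≤ k) (p : ℕ) :
    p ∈ Theta i j ↔ ∃ S : Finset ℕ, Good k i S ∧ p = 1 + (∑ t ∈ S, L t) ∧
      (∑ t ∈ S, L t) + L k ≤ L i := by
  subst hk
  have hm := main i (i-j) (p-1) hk4 (Nat.sub_le i j)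
  show occursAt _ _ _ ↔ _
  unfold occursAt
  constructor
  · rintro ⟨hp, hocc⟩
    obtain ⟨S, h1, h2, h3⟩ := hm.mp hocc
    exact ⟨S, h1, by omega, by omega⟩
  · rintro ⟨S, h1, h2, h3⟩
    refine ⟨by omega, hm.mpr ⟨S, h1, by omega, by omega⟩⟩

lemma good_insert_bot {k i : ℕ} {S : Finset ℕ} (hG : Good (k+2) i S) (hki : k < i) :
    Good k i (insert k S) ∧ k ∉ S ∧
      (∑ t ∈ insert k S, L t) = L k + ∑ t ∈ S, L t := by
  have hnot : k ∉ S := fun hc => by have := (hG.1 k hc).1; omega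
  refine ⟨⟨?_, ?_⟩, hnot, Finset.sum_insert hnot⟩
  · intro t ht
    rcases Finset.mem_insert.mp ht with rfl | ht'
    · omega
    · have := hG.1 t ht'
      omega
  · intro t ht hc
    rcases Finset.mem_insert.mp ht with rfl | ht'
    · rcases Finset.mem_insert.mp hc with h' | h'
      · omega
      · have := (hG.1 _ h').1
        omega
    · rcases Finset.mem_insert.mp hc with h' | h'
      · have := (hG.1 t ht').1
        omega
      · exact hG.2 t ht' h'

lemma good_erase_bot {k i : ℕ} {S : Finset ℕ} (hG : Good k i S) (hmem : k ∈ S) :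
    Good (k+2) i (S.erase k) ∧
      (∑ t ∈ S, L t) = L k + ∑ t ∈ S.erase k, L t := by
  refine ⟨⟨?_, ?_⟩, (Finset.add_sum_erase S L hmem).symm⟩
  · intro t ht
    have ht' := Finset.mem_of_mem_erase ht
    have hne := Finset.ne_of_mem_erase ht
    have h1 := hG.1 t ht'
    have h2 : t ≠ k + 1 := by
      intro rfl'
      exact (hG.2 k hmem) (rfl' ▸ ht')
    omega
  · intro t ht hc
    exact hG.2 t (Finset.mem_of_mem_erase ht) (Finset.mem_of_mem_erase hc)

lemma good_shift_up {k i : ℕ} {S : Finset ℕ} (hG : Good (k+1) i S) : Good k i S :=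
  ⟨fun t ht => ⟨by have := (hG.1 t ht).1; omega, (hG.1 t ht).2⟩, hG.2⟩

/-- The alternating-set witness specialized: for `a ≥ 2`, `a ≤ b+1`... gives a Good set. -/
lemma alt_witness (a i : ℕ) (ha : 2 ≤ a) (hai : a + 1 ≤ i) (hpar : (i - 1) % 2 = a % 2) :
    ∃ S : Finset ℕ, Good a i S ∧ (∑ t ∈ S, L t) + L (a-1) = L i := by
  obtain ⟨S, h1, h2, h3⟩ := alt_sum ((i - 1 - a) / 2) a ha
  have hb : a + 2 * ((i-1-a)/2) = i - 1 := by omega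
  rw [hb] at h1
  rw [hb] at h3
  rw [show i - 1 + 1 = i by omega] at h3
  exact ⟨S, ⟨fun t ht => by have := h1 t ht; omega, h2⟩, h3⟩

theorem theta_recurrence (i : ℕ) (hi : 6 ≤ i) :
    Theta i 0 = {1} ∧ Theta i 1 = {1} ∧
    ∀ j, 2 ≤ j → j ≤ i - 4 →
      (j % 2 = 0 →
        Theta i j = Theta i (j - 1) ∪ ((· + (fibw (i - j)).length) '' Theta i (j - 2)) ∪
            {(fibw i).length - (fibw (i - j)).length + 1} ∧
        Disjoint (Theta i (j - 1)) ((· + (fibw (i - j)).length) '' Theta i (j - 2)) ∧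
        (fibw i).length - (fibw (i - j)).length + 1 ∉
          Theta i (j - 1) ∪ ((· + (fibw (i - j)).length) '' Theta i (j - 2)) ∧
        ((fibw i).length - (fibw (i - j)).length + 1) ∈ Theta i j ∧
        ∀ p ∈ Theta i j, p ≤ (fibw i).length - (fibw (i - j)).length + 1) ∧
      (j % 2 = 1 →
        Theta i j = Theta i (j - 1) ∪ ((· + (fibw (i - j)).length) '' Theta i (j - 2)) ∧
        Disjoint (Theta i (j - 1)) ((· + (fibw (i - j)).length) '' Theta i (j - 2)) ∧
        ((fibw i).length - (fibw (i - (j - 1))).length + 1) ∈ Theta i j ∧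
        ∀ p ∈ Theta i j, p ≤ (fibw i).length - (fibw (i - (j - 1))).length + 1) := by
  have hpart1 : Theta i 0 = {1} := by
    ext p
    rw [mem_theta i 0 i (by omega) (by omega)]
    simp only [Set.mem_singleton_iff]
    constructor
    · rintro ⟨S, hG, hp, hfit⟩
      rw [good_of_le hG le_rfl] at hp
      simp at hp
      omega
    · rintro rfl
      exact ⟨∅, good_empty _ _, by simp, by simp⟩
  have hpart2 : Theta i 1 = {1} := by
    ext p
    rw [mem_theta i 1 (i-1) (by omega) (by omega)]
    simp only [Set.mem_singleton_iff]
    have hrec : L i = L (i-1) + L (i-2) := by have := L_rec i (by omega); omega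
    have hlt : L (i-2) < L (i-1) := L_lt (by omega) (by omega)
    constructor
    · rintro ⟨S, hG, hp, hfit⟩
      have hempty : S = ∅ := by
        by_contra hne
        obtain ⟨t, ht⟩ := Finset.nonempty_iff_ne_empty.mpr hne
        have h1 := hG.1 t ht
        have h2 : t = i - 1 := by omega
        subst h2
        have := Finset.single_le_sum (f := L) (fun _ _ => Nat.zero_le _) ht
        omega
      rw [hempty] at hp
      simp at hp
      omega
    · rintro rfl
      refine ⟨∅, good_empty _ _, by simp, ?_⟩
      simp only [Finset.sum_empty]
      omega
  refine ⟨hpart1, hpart2, ?_⟩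
  intro j hj2 hj4
  have hk4 : 4 ≤ i - j := by omega
  set k := i - j with hkdef
  have ekm1 : i - (j-1) = k + 1 := by omega
  have ekm2 : i - (j-2) = k + 2 := by omega
  have hki : k + 2 ≤ i := by omega
  have hLk1 : L (k+1) = L k + L (k-1) := by
    have := L_rec (k+1) (by omega)
    simpa [show k+1-1 = k by omega, show k+1-2 = k-1 by omega] using this
  have hLk2 : L (k+2) = L (k+1) + L k := by
    have := L_rec (k+2) (by omega)
    simpa [show k+2-1 = k+1 by omega, show k+2-2 = k by omega] using this
  have hm1 : L (k-1) < L k := L_lt (by omega) (by omega)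
  have hm2 : L (k+1) ≤ L i := L_mono (by omega)
  have hm3 : L (k+2) ≤ L i := L_mono (by omega)
  have hm4 : L k ≤ L (k+1) := L_mono (by omega)
  have hm5 : L k ≤ L i := L_mono (by omega)
  have hpos : 1 ≤ L (k-1) := L_pos _ (by omega)
  have hposk : 1 ≤ L k := L_pos _ (by omega)
  have hlenk : (fibw k).length = L k := rfl
  have hleni : (fibw i).length = L i := rfl
  have M0 : ∀ p, p ∈ Theta i j ↔ ∃ S, Good k i S ∧ p = 1 + (∑ t ∈ S, L t) ∧
      (∑ t ∈ S, L t) + L k ≤ L i := fun p => mem_theta i j k hkdef.symm (by omega) p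
  have M1 : ∀ p, p ∈ Theta i (j-1) ↔ ∃ S, Good (k+1) i S ∧ p = 1 + (∑ t ∈ S, L t) ∧
      (∑ t ∈ S, L t) + L (k+1) ≤ L i := fun p => mem_theta i (j-1) (k+1) (by omega) (by omega) p
  have M2 : ∀ p, p ∈ Theta i (j-2) ↔ ∃ S, Good (k+2) i S ∧ p = 1 + (∑ t ∈ S, L t) ∧
      (∑ t ∈ S, L t) + L (k+2) ≤ L i := fun p => mem_theta i (j-2) (k+2) (by omega) (by omega) p
  have MIm : ∀ p, p ∈ ((· + (fibw k).length) '' Theta i (j-2)) ↔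
      ∃ S, Good (k+2) i S ∧ p = 1 + (∑ t ∈ S, L t) + L k ∧
        (∑ t ∈ S, L t) + L (k+2) ≤ L i := by
    intro p
    simp only [Set.mem_image]
    constructor
    · rintro ⟨q, hq, rfl⟩
      obtain ⟨S, hG, rfl, hfit⟩ := (M2 q).mp hq
      refine ⟨S, hG, ?_, hfit⟩
      rw [hlenk]
    · rintro ⟨S, hG, hp, hfit⟩
      refine ⟨1 + ∑ t ∈ S, L t, (M2 _).mpr ⟨S, hG, rfl, hfit⟩, ?_⟩
      rw [hlenk]
      omega
  have hforward : ∀ p, p ∈ Theta i j → p ∈ Theta i (j-1) ∨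
      p ∈ ((· + (fibw k).length) '' Theta i (j-2)) ∨ (i % 2 = k % 2 ∧ p = L i - L k + 1) := by
    intro p hp
    obtain ⟨S, hG, hp1, hfit⟩ := (M0 p).mp hp
    by_cases hmem : k ∈ S
    · obtain ⟨hG', hsum⟩ := good_erase_bot hG hmem
      have hfit' : (∑ t ∈ S.erase k, L t) + L (k+2) ≤ L i := by
        by_contra hc
        push_neg at hc
        have := gap i (k+2) (S.erase k) (by omega) (by omega) hG' hc
        rw [show k+2-1 = k+1 by omega] at this
        omega
      exact Or.inr (Or.inl ((MIm p).mpr ⟨S.erase k, hG', by omega, hfit'⟩))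
    · have hG1 : Good (k+1) i S := by
        refine ⟨fun t ht => ?_, hG.2⟩
        have h9 := hG.1 t ht
        have : t ≠ k := fun hc => hmem (hc ▸ ht)
        omega
      by_cases hfit1 : (∑ t ∈ S, L t) + L (k+1) ≤ L i
      · exact Or.inl ((M1 p).mpr ⟨S, hG1, hp1, hfit1⟩)
      · have := gap i (k+1) S (by omega) (by omega) hG1 (by omega)
        rw [show k+1-1 = k by omega] at this
        exact Or.inr (Or.inr ⟨by omega, by omega⟩)
  have hback1 : ∀ p, p ∈ Theta i (j-1) → p ∈ Theta i j := by
    intro p hp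
    obtain ⟨S, hG, hp1, hfit⟩ := (M1 p).mp hp
    exact (M0 p).mpr ⟨S, good_shift_up hG, hp1, by omega⟩
  have hback2 : ∀ p, p ∈ ((· + (fibw k).length) '' Theta i (j-2)) → p ∈ Theta i j := by
    intro p hp
    obtain ⟨S, hG, hp1, hfit⟩ := (MIm p).mp hp
    obtain ⟨hGi, hnot, hsum⟩ := good_insert_bot hG (by omega)
    exact (M0 p).mpr ⟨insert k S, hGi, by omega, by omega⟩
  have hmaxmem_even : i % 2 = k % 2 → (L i - L k + 1) ∈ Theta i j := by
    intro hpar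
    obtain ⟨S, hG, hsum⟩ := alt_witness (k+1) i (by omega) (by omega) (by omega)
    rw [show k+1-1 = k by omega] at hsum
    exact (M0 _).mpr ⟨S, good_shift_up hG, by omega, by omega⟩
  have hmaxmem_odd : i % 2 ≠ k % 2 → (L i - L (k+1) + 1) ∈ Theta i j := by
    intro hpar
    obtain ⟨S, hG, hsum⟩ := alt_witness (k+2) i (by omega) (by omega) (by omega)
    rw [show k+2-1 = k+1 by omega] at hsum
    exact (M0 _).mpr ⟨S, good_shift_up (good_shift_up hG), by omega, by omega⟩
  have hdisj : Disjoint (Theta i (j-1)) ((· + (fibw k).length) '' Theta i (j-2)) := by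
    rw [Set.disjoint_left]
    intro p hp1 hp2
    obtain ⟨S, hG1, he1, hf1⟩ := (M1 p).mp hp1
    obtain ⟨T, hG2, he2, hf2⟩ := (MIm p).mp hp2
    obtain ⟨hGi, hnot, hsum⟩ := good_insert_bot hG2 (by omega)
    have heq : S = insert k T :=
      sum_inj i k S (insert k T) (by omega) (good_shift_up hG1) hGi (by omega)
    have hkS : k ∈ S := heq ▸ Finset.mem_insert_self k T
    have := (hG1.1 k hkS).1
    omega
  have hmax : ∀ p ∈ Theta i j, p ≤ L i - L k + 1 := by
    intro p hp
    obtain ⟨S, hG, hp1, hfit⟩ := (M0 p).mp hp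
    omega
  have hmax_odd : i % 2 ≠ k % 2 → ∀ p ∈ Theta i j, p ≤ L i - L (k+1) + 1 := by
    intro hpar p hp
    obtain ⟨S, hG, hp1, hfit⟩ := (M0 p).mp hp
    by_contra hc
    push_neg at hc
    by_cases hmem : k ∈ S
    · obtain ⟨hG', hsum⟩ := good_erase_bot hG hmem
      have := gap i (k+2) (S.erase k) (by omega) (by omega) hG' (by omega)
      rw [show k+2-1 = k+1 by omega] at this
      omega
    · have hG1 : Good (k+1) i S := by
        refine ⟨fun t ht => ?_, hG.2⟩
        have h9 := hG.1 t ht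
        have : t ≠ k := fun hc2 => hmem (hc2 ▸ ht)
        omega
      have := gap i (k+1) S (by omega) (by omega) hG1 (by omega)
      rw [show k+1-1 = k by omega] at this
      omega
  have hnotmax : (L i - L k + 1) ∉
      Theta i (j-1) ∪ ((· + (fibw k).length) '' Theta i (j-2)) := by
    rintro (hp | hp)
    · obtain ⟨S, hG, hp1, hfit⟩ := (M1 _).mp hp
      omega
    · obtain ⟨S, hG, hp1, hfit⟩ := (MIm _).mp hp
      omega
  constructor
  · -- even case
    intro hje
    have hpar : i % 2 = k % 2 := by omega
    have hunion : Theta i j = Theta i (j-1) ∪ ((· + (fibw k).length) '' Theta i (j-2)) ∪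
        {(fibw i).length - (fibw k).length + 1} := by
      ext p
      simp only [Set.mem_union, Set.mem_singleton_iff]
      constructor
      · intro hp
        rcases hforward p hp with h | h | h
        · exact Or.inl (Or.inl h)
        · exact Or.inl (Or.inr h)
        · exact Or.inr h.2
      · rintro ((h | h) | h)
        · exact hback1 p h
        · exact hback2 p h
        · rw [h]
          exact hmaxmem_even hpar
    exact ⟨hunion, hdisj, hnotmax, hmaxmem_even hpar, hmax⟩
  · -- odd case
    intro hjo
    have hpar : i % 2 ≠ k % 2 := by omega
    have hunion : Theta i j = Theta i (j-1) ∪ ((· + (fibw k).length) '' Theta i (j-2)) := by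
      ext p
      simp only [Set.mem_union]
      constructor
      · intro hp
        rcases hforward p hp with h | h | h
        · exact Or.inl h
        · exact Or.inr h
        · exact absurd h.1 hpar
      · rintro (h | h)
        · exact hback1 p h
        · exact hback2 p h
    refine ⟨hunion, hdisj, ?_, ?_⟩
    · rw [ekm1]
      exact hmaxmem_odd hpar
    · rw [ekm1]
      exact hmax_odd hpar
end
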